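/- arXiv:0704.2810 — 3 statements merged into one kernel-verified Lean document; each statement's English description precedes it below -/
import Mathlib

section
/- The double swallowtail f_DS(u,v) = (2u³−uv², 3u⁴−u²v², v) with unit normal ν_DS(u,v) = (−2u, 1, −2u²v)/√(1+4u²(1+u²v²)) is a front: the map L := (f_DS, ν_DS) : ℝ² → ℝ³ × ℝ³ is an immersion, i.e. dL_p is injective at every point p ∈ ℝ². -/
noncomputable section

/-- The standard double swallowtail `f_DS(u,v) = (2u³−uv², 3u⁴−u²v², v)`. -/
def fDS : ℝ × ℝ → Fin 3 → ℝ :=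
  fun p => ![2 * p.1 ^ 3 - p.1 * p.2 ^ 2, 3 * p.1 ^ 4 - p.1 ^ 2 * p.2 ^ 2, p.2]

/-- The unit normal `ν_DS(u,v) = (−2u, 1, −2u²v)/√(1+4u²(1+u²v²))`. -/
def nuDS : ℝ × ℝ → Fin 3 → ℝ :=
  fun p => (Real.sqrt (1 + 4 * p.1 ^ 2 * (1 + p.1 ^ 2 * p.2 ^ 2)))⁻¹ •
    ![-2 * p.1, 1, -2 * p.1 ^ 2 * p.2]

/-- The scalar factor in `nuDS`. -/
def hDS : ℝ × ℝ → ℝ :=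
  fun p => (Real.sqrt (1 + 4 * p.1 ^ 2 * (1 + p.1 ^ 2 * p.2 ^ 2)))⁻¹

lemma EDS_pos (q : ℝ × ℝ) : 0 < 1 + 4 * q.1 ^ 2 * (1 + q.1 ^ 2 * q.2 ^ 2) := by
  nlinarith [sq_nonneg q.1, sq_nonneg (q.1 * q.2)]

lemma hDS_pos (q : ℝ × ℝ) : 0 < hDS q := by
  unfold hDS
  exact inv_pos.mpr (Real.sqrt_pos.mpr (EDS_pos q))

lemma hDS_diff (p : ℝ × ℝ) : DifferentiableAt ℝ hDS p := by
  have hE : DifferentiableAt ℝ (fun q : ℝ × ℝ =>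
      1 + 4 * q.1 ^ 2 * (1 + q.1 ^ 2 * q.2 ^ 2)) p := by fun_prop
  have h1 : DifferentiableAt ℝ (fun q : ℝ × ℝ =>
      Real.sqrt (1 + 4 * q.1 ^ 2 * (1 + q.1 ^ 2 * q.2 ^ 2))) p :=
    hE.sqrt (EDS_pos p).ne'
  exact h1.inv (Real.sqrt_pos.mpr (EDS_pos p)).ne'

lemma nuDS_apply (q : ℝ × ℝ) :
    nuDS q = fun i => hDS q * (![-2 * q.1, 1, -2 * q.1 ^ 2 * q.2] i) := by
  funext i
  simp [nuDS, hDS]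

lemma nuDS_diff (p : ℝ × ℝ) : DifferentiableAt ℝ nuDS p := by
  rw [show nuDS = fun q => fun i => hDS q * (![-2 * q.1, 1, -2 * q.1 ^ 2 * q.2] i) from
    funext nuDS_apply]
  apply differentiableAt_pi.mpr
  intro i
  fin_cases i <;> simp <;>
    first | exact hDS_diff p | exact (hDS_diff p).mul (by fun_prop)

lemma fDS_diff (p : ℝ × ℝ) : DifferentiableAt ℝ fDS p := by
  apply differentiableAt_pi.mpr
  intro i
  unfold fDS
  fin_cases i <;> simp <;> fun_prop

/-- The double swallowtail is a front: `L = (f_DS, ν_DS) : ℝ² → ℝ³ × ℝ³` is an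
immersion, i.e. its differential is injective at every point. -/
theorem double_swallowtail_is_front :
    ∀ p : ℝ × ℝ,
      Function.Injective (fderiv ℝ (fun q : ℝ × ℝ => (fDS q, nuDS q)) p) := by
  intro p
  set L : ℝ × ℝ → (Fin 3 → ℝ) × (Fin 3 → ℝ) := fun q => (fDS q, nuDS q) with hLdef
  have hLdiff : DifferentiableAt ℝ L p := (fDS_diff p).prodMk (nuDS_diff p)
  have hL : HasFDerivAt L (fderiv ℝ L p) p := hLdiff.hasFDerivAt
  set DL := fderiv ℝ L p with hDL
  -- reduce to kernel
  intro x y hxy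
  have hker : DL (x - y) = 0 := by rw [map_sub, hxy, sub_self]
  set w := x - y with hw
  suffices hw0 : w = 0 by
    have := sub_eq_zero.mp hw0
    exact this
  -- projections
  -- π2 : third coordinate of fDS
  let π2 : ((Fin 3 → ℝ) × (Fin 3 → ℝ)) →L[ℝ] ℝ :=
    (ContinuousLinearMap.proj 2).comp (ContinuousLinearMap.fst ℝ _ _)
  have hπ2L : (fun q : ℝ × ℝ => π2 (L q)) = fun q : ℝ × ℝ => q.2 := by
    funext q; simp [π2, hLdef, fDS]
  have h2 : HasFDerivAt (fun q : ℝ × ℝ => q.2) (π2.comp DL) p := by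
    rw [← hπ2L]; exact (π2.hasFDerivAt).comp p hL
  have hb : w.2 = 0 := by
    have := h2.unique (hasFDerivAt_snd)
    have hval : (ContinuousLinearMap.snd ℝ ℝ ℝ) w = π2 (DL w) := by
      rw [← this]; rfl
    simpa [hker] using hval
  -- ν second component = hDS
  let π1 : ((Fin 3 → ℝ) × (Fin 3 → ℝ)) →L[ℝ] ℝ :=
    (ContinuousLinearMap.proj 1).comp (ContinuousLinearMap.snd ℝ _ _)
  have hπ1L : (fun q : ℝ × ℝ => π1 (L q)) = hDS := by
    funext q; simp [π1, hLdef, nuDS_apply]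
  have h1 : HasFDerivAt hDS (π1.comp DL) p := by
    rw [← hπ1L]; exact (π1.hasFDerivAt).comp p hL
  have hDh : fderiv ℝ hDS p w = 0 := by
    rw [h1.fderiv]
    simp [hker]
  -- ν first component = -2 * q.1 * hDS q
  let π0 : ((Fin 3 → ℝ) × (Fin 3 → ℝ)) →L[ℝ] ℝ :=
    (ContinuousLinearMap.proj 0).comp (ContinuousLinearMap.snd ℝ _ _)
  have hπ0L : (fun q : ℝ × ℝ => π0 (L q)) = fun q : ℝ × ℝ => hDS q * (-2 * q.1) := by
    funext q; simp [π0, hLdef, nuDS_apply]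
  have hlin : HasFDerivAt (fun q : ℝ × ℝ => -2 * q.1)
      ((-2 : ℝ) • (ContinuousLinearMap.fst ℝ ℝ ℝ)) p := by
    exact ((hasFDerivAt_fst (𝕜 := ℝ) (p := p)).const_mul (-2 : ℝ))
  have hmul : HasFDerivAt (fun q : ℝ × ℝ => hDS q * (-2 * q.1))
      (hDS p • ((-2 : ℝ) • (ContinuousLinearMap.fst ℝ ℝ ℝ)) +
        (-2 * p.1) • fderiv ℝ hDS p) p :=
    ((hDS_diff p).hasFDerivAt).mul hlin
  have h0 : HasFDerivAt (fun q : ℝ × ℝ => hDS q * (-2 * q.1)) (π0.comp DL) p := by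
    rw [← hπ0L]; exact (π0.hasFDerivAt).comp p hL
  have heq := h0.unique hmul
  have ha : hDS p * (-2 * w.1) + (-2 * p.1) * (fderiv ℝ hDS p w) = 0 := by
    have hval : π0 (DL w) = (hDS p • ((-2 : ℝ) • (ContinuousLinearMap.fst ℝ ℝ ℝ)) +
        (-2 * p.1) • fderiv ℝ hDS p) w := by rw [← heq]; rfl
    have : π0 (DL w) = 0 := by simp [hker]
    rw [this] at hval
    simpa [smul_eq_mul, mul_comm, mul_assoc, mul_left_comm] using hval.symm
  rw [hDh] at ha
  have hw1 : w.1 = 0 := by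
    have := hDS_pos p
    nlinarith
  exact Prod.ext hw1 hb
end
end

section
/- For the double swallowtail f_DS(u,v) = (2u³−uv², 3u⁴−u²v², v) with unit normal ν_DS(u,v) = (−2u, 1, −2u²v)/√(1+4u²(1+u²v²)), the signed area density λ = det((f_DS)_u, (f_DS)_v, ν_DS) equals (v²−6u²)·√(1+4u²(1+u²v²)); consequently the singular set of f_DS is the union of the two lines {v = √6·u} ∪ {v = −√6·u}, and ∂f_DS/∂u vanishes identically on this singular set (the null direction is the u-direction). -/
noncomputable section

/-- Determinant of three vectors in ℝ³ (as rows). -/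
def det3 (a b c : Fin 3 → ℝ) : ℝ := Matrix.det (Matrix.of ![a, b, c])

/-- The signed area density `λ = det(f_u, f_v, ν)` of the double swallowtail. -/
def lamDS : ℝ × ℝ → ℝ :=
  fun p => det3 (fderiv ℝ fDS p (1, 0)) (fderiv ℝ fDS p (0, 1)) (nuDS p)

/-- The total derivative of `fDS` at `p`, as an explicit continuous linear map. -/
def LDS (p : ℝ × ℝ) : (ℝ × ℝ) →L[ℝ] (Fin 3 → ℝ) :=
  ContinuousLinearMap.pi ![
    (6*p.1^2 - p.2^2) • ContinuousLinearMap.fst ℝ ℝ ℝ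
      + (-(2*p.1*p.2)) • ContinuousLinearMap.snd ℝ ℝ ℝ,
    (12*p.1^3 - 2*p.1*p.2^2) • ContinuousLinearMap.fst ℝ ℝ ℝ
      + (-(2*p.1^2*p.2)) • ContinuousLinearMap.snd ℝ ℝ ℝ,
    ContinuousLinearMap.snd ℝ ℝ ℝ]

lemma fDS_hasFDerivAt (p : ℝ × ℝ) : HasFDerivAt fDS (LDS p) p := by
  rw [hasFDerivAt_pi']
  intro i
  fin_cases i
  · have h1 : HasFDerivAt Prod.fst (ContinuousLinearMap.fst ℝ ℝ ℝ) p := hasFDerivAt_fst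
    have h2 : HasFDerivAt Prod.snd (ContinuousLinearMap.snd ℝ ℝ ℝ) p := hasFDerivAt_snd
    have h := (((h1.mul h1).mul h1).const_mul (2:ℝ)).sub (h1.mul (h2.mul h2))
    convert h using 1
    · ext x; simp [fDS]; ring
    · ext x <;> simp [LDS] <;> ring
  · have h1 : HasFDerivAt Prod.fst (ContinuousLinearMap.fst ℝ ℝ ℝ) p := hasFDerivAt_fst
    have h2 : HasFDerivAt Prod.snd (ContinuousLinearMap.snd ℝ ℝ ℝ) p := hasFDerivAt_snd
    have h := ((((h1.mul h1).mul h1).mul h1).const_mul (3:ℝ)).sub ((h1.mul h1).mul (h2.mul h2))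
    convert h using 1
    · ext x; simp [fDS]; ring
    · ext x <;> simp [LDS] <;> ring
  · exact hasFDerivAt_snd

lemma lamDS_eq (p : ℝ × ℝ) : lamDS p =
    (p.2 ^ 2 - 6 * p.1 ^ 2) * Real.sqrt (1 + 4 * p.1 ^ 2 * (1 + p.1 ^ 2 * p.2 ^ 2)) := by
  have ht : (0:ℝ) < 1 + 4 * p.1 ^ 2 * (1 + p.1 ^ 2 * p.2 ^ 2) := by positivity
  have hs : 0 < Real.sqrt (1 + 4 * p.1 ^ 2 * (1 + p.1 ^ 2 * p.2 ^ 2)) := Real.sqrt_pos.2 ht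
  have hsq : Real.sqrt (1 + 4 * p.1 ^ 2 * (1 + p.1 ^ 2 * p.2 ^ 2)) ^ 2
      = 1 + 4 * p.1 ^ 2 * (1 + p.1 ^ 2 * p.2 ^ 2) := Real.sq_sqrt ht.le
  unfold lamDS det3
  rw [(fDS_hasFDerivAt p).fderiv]
  simp only [LDS, nuDS, Matrix.det_fin_three, Matrix.of_apply, Matrix.cons_val',
    Matrix.cons_val_zero, Matrix.cons_val_one, Matrix.head_cons, Matrix.empty_val',
    Matrix.cons_val_fin_one, Matrix.head_fin_const, Matrix.cons_val_two, Matrix.tail_cons,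
    ContinuousLinearMap.pi_apply, ContinuousLinearMap.add_apply, ContinuousLinearMap.smul_apply,
    ContinuousLinearMap.coe_fst', ContinuousLinearMap.coe_snd', Pi.smul_apply, smul_eq_mul]
  field_simp
  have hsq' : Real.sqrt (1 + p.1 ^ 2 * 4 * (1 + p.1 ^ 2 * p.2 ^ 2)) ^ 2
      = 1 + p.1 ^ 2 * 4 * (1 + p.1 ^ 2 * p.2 ^ 2) := Real.sq_sqrt (by positivity)
  linear_combination (-(p.2 ^ 2 - 6 * p.1 ^ 2)) * hsq'

/-- For the double swallowtail, `λ(u,v) = (v²−6u²)·√(1+4u²(1+u²v²))`; hence the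
singular set is the pair of lines `{v = √6·u} ∪ {v = −√6·u}`, and `∂f_DS/∂u`
vanishes identically on the singular set (the null direction is the
`u`-direction). -/
theorem double_swallowtail_area_density :
    (∀ p : ℝ × ℝ, lamDS p =
      (p.2 ^ 2 - 6 * p.1 ^ 2) * Real.sqrt (1 + 4 * p.1 ^ 2 * (1 + p.1 ^ 2 * p.2 ^ 2))) ∧
    ({p : ℝ × ℝ | lamDS p = 0} =
      {p : ℝ × ℝ | p.2 = Real.sqrt 6 * p.1} ∪ {p : ℝ × ℝ | p.2 = -(Real.sqrt 6 * p.1)}) ∧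
    (∀ p : ℝ × ℝ, lamDS p = 0 → fderiv ℝ fDS p (1, 0) = 0) := by
  have h6 : Real.sqrt 6 ^ 2 = 6 := Real.sq_sqrt (by norm_num)
  have key : ∀ p : ℝ × ℝ, lamDS p = 0 ↔ p.2 ^ 2 - 6 * p.1 ^ 2 = 0 := by
    intro p
    have ht : (0:ℝ) < 1 + 4 * p.1 ^ 2 * (1 + p.1 ^ 2 * p.2 ^ 2) := by positivity
    have hs : 0 < Real.sqrt (1 + 4 * p.1 ^ 2 * (1 + p.1 ^ 2 * p.2 ^ 2)) := Real.sqrt_pos.2 ht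
    rw [lamDS_eq, mul_eq_zero]
    simp [hs.ne']
  refine ⟨lamDS_eq, ?_, ?_⟩
  · ext p
    simp only [Set.mem_setOf_eq, Set.mem_union, key p]
    constructor
    · intro h
      have hfac : (p.2 - Real.sqrt 6 * p.1) * (p.2 + Real.sqrt 6 * p.1) = 0 := by
        linear_combination h - p.1 ^ 2 * h6
      rcases mul_eq_zero.1 hfac with h' | h'
      · left; linarith
      · right; linarith
    · rintro (h | h) <;> rw [h] <;> linear_combination p.1 ^ 2 * h6
  · intro p hp
    have h := (key p).1 hp
    rw [(fDS_hasFDerivAt p).fderiv]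
    funext i
    fin_cases i
    · simp [LDS]; linear_combination -h
    · simp [LDS]; linear_combination (-2 * p.1) * h
    · simp [LDS]
end
end

section
/- For the double swallowtail f_DS(u,v) = (2u³−uv², 3u⁴−u²v², v) with unit normal ν_DS(u,v) = (−2u, 1, −2u²v)/√(1+4u²(1+u²v²)) and signed area density λ = det((f_DS)_u, (f_DS)_v, ν_DS): the origin is a degenerate singular point (λ(0,0) = 0 and dλ_{(0,0)} = 0), while every other singular point is a non-degenerate A₂-point; e.g. along γ(t) = (t, √6·t) (and likewise (t, −√6·t)) with null vector field η = (1,0) one has dλ_{γ(t)} ≠ 0 and det(γ̇(t), η) = −√6 ≠ 0 for t ≠ 0. -/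
noncomputable section

/-- Determinant of two vectors in ℝ² (as rows of a 2×2 matrix). -/
def det2 (a b : ℝ × ℝ) : ℝ := Matrix.det !![a.1, a.2; b.1, b.2]

lemma pow_hasFDerivAt (n : ℕ) (p : ℝ × ℝ) :
    HasFDerivAt (fun q : ℝ × ℝ => q.1 ^ n)
      ((n * p.1 ^ (n - 1)) • ContinuousLinearMap.fst ℝ ℝ ℝ) p :=
  (hasDerivAt_pow n p.1).comp_hasFDerivAt p hasFDerivAt_fst

lemma pow_hasFDerivAt' (n : ℕ) (p : ℝ × ℝ) :
    HasFDerivAt (fun q : ℝ × ℝ => q.2 ^ n)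
      ((n * p.2 ^ (n - 1)) • ContinuousLinearMap.snd ℝ ℝ ℝ) p :=
  (hasDerivAt_pow n p.2).comp_hasFDerivAt p hasFDerivAt_snd

def FDS (p : ℝ × ℝ) : (ℝ × ℝ) →L[ℝ] (Fin 3 → ℝ) :=
  ContinuousLinearMap.pi
    ![(6 * p.1 ^ 2 - p.2 ^ 2) • ContinuousLinearMap.fst ℝ ℝ ℝ
        + (-(2 * p.1 * p.2)) • ContinuousLinearMap.snd ℝ ℝ ℝ,
      (12 * p.1 ^ 3 - 2 * p.1 * p.2 ^ 2) • ContinuousLinearMap.fst ℝ ℝ ℝ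
        + (-(2 * p.1 ^ 2 * p.2)) • ContinuousLinearMap.snd ℝ ℝ ℝ,
      ContinuousLinearMap.snd ℝ ℝ ℝ]

lemma hasFDeriv_fDS (p : ℝ × ℝ) : HasFDerivAt fDS (FDS p) p := by
  apply hasFDerivAt_pi''
  intro i
  fin_cases i <;>
    simp only [FDS, ContinuousLinearMap.proj_pi, Matrix.cons_val_zero, Matrix.cons_val_one,
      Matrix.head_cons, fDS, Matrix.cons_val_two, Matrix.tail_cons]
  · have h := (((pow_hasFDerivAt 3 p).const_mul (2:ℝ)).sub
      ((hasFDerivAt_fst).mul (pow_hasFDerivAt' 2 p)))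
    refine h.congr_fderiv ?_
    apply ContinuousLinearMap.ext; intro v; simp; ring
  · have h := (((pow_hasFDerivAt 4 p).const_mul (3:ℝ)).sub
      ((pow_hasFDerivAt 2 p).mul (pow_hasFDerivAt' 2 p)))
    refine h.congr_fderiv ?_
    apply ContinuousLinearMap.ext; intro v; simp; ring
  · exact hasFDerivAt_snd

lemma fderiv_fDS (p : ℝ × ℝ) : fderiv ℝ fDS p = FDS p := (hasFDeriv_fDS p).fderiv

lemma fu (p : ℝ × ℝ) :
    fderiv ℝ fDS p (1, 0) = ![6 * p.1 ^ 2 - p.2 ^ 2, 12 * p.1 ^ 3 - 2 * p.1 * p.2 ^ 2, 0] := by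
  rw [fderiv_fDS]
  funext i; fin_cases i <;> simp [FDS]

lemma fv (p : ℝ × ℝ) :
    fderiv ℝ fDS p (0, 1) = ![-(2 * p.1 * p.2), -(2 * p.1 ^ 2 * p.2), 1] := by
  rw [fderiv_fDS]
  funext i; fin_cases i <;> simp [FDS]

lemma lam_eq : lamDS = fun p : ℝ × ℝ =>
    (p.2 ^ 2 - 6 * p.1 ^ 2) * Real.sqrt (1 + 4 * p.1 ^ 2 * (1 + p.1 ^ 2 * p.2 ^ 2)) := by
  funext p
  have hA : (0:ℝ) < 1 + 4 * p.1 ^ 2 * (1 + p.1 ^ 2 * p.2 ^ 2) := by positivity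
  set s := Real.sqrt (1 + 4 * p.1 ^ 2 * (1 + p.1 ^ 2 * p.2 ^ 2)) with hsdef
  have hs : s ^ 2 = 1 + 4 * p.1 ^ 2 * (1 + p.1 ^ 2 * p.2 ^ 2) := Real.sq_sqrt hA.le
  have hspos : 0 < s := Real.sqrt_pos.2 hA
  simp only [lamDS, det3, fu, fv, nuDS, ← hsdef]
  rw [Matrix.det_fin_three]
  simp [Matrix.of_apply]
  field_simp
  ring_nf
  nlinarith [hs, hspos]

lemma fderiv_lam (p : ℝ × ℝ) (h0 : p.2 ^ 2 - 6 * p.1 ^ 2 = 0) :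
    fderiv ℝ lamDS p = Real.sqrt (1 + 4 * p.1 ^ 2 * (1 + p.1 ^ 2 * p.2 ^ 2)) •
      ((2 * p.2) • ContinuousLinearMap.snd ℝ ℝ ℝ - (12 * p.1) • ContinuousLinearMap.fst ℝ ℝ ℝ) := by
  have hA : (0:ℝ) < 1 + 4 * p.1 ^ 2 * (1 + p.1 ^ 2 * p.2 ^ 2) := by positivity
  have hQ : DifferentiableAt ℝ (fun q : ℝ × ℝ => 1 + 4 * q.1 ^ 2 * (1 + q.1 ^ 2 * q.2 ^ 2)) p := by
    fun_prop
  have hS : DifferentiableAt ℝ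
      (fun q : ℝ × ℝ => Real.sqrt (1 + 4 * q.1 ^ 2 * (1 + q.1 ^ 2 * q.2 ^ 2))) p :=
    hQ.sqrt (ne_of_gt hA)
  have hg : HasFDerivAt (fun q : ℝ × ℝ => q.2 ^ 2 - 6 * q.1 ^ 2)
      ((2 * p.2) • ContinuousLinearMap.snd ℝ ℝ ℝ - (12 * p.1) • ContinuousLinearMap.fst ℝ ℝ ℝ) p := by
    refine ((pow_hasFDerivAt' 2 p).sub ((pow_hasFDerivAt 2 p).const_mul 6)).congr_fderiv ?_
    apply ContinuousLinearMap.ext; intro v; simp; ring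
  have hmul := hg.mul hS.hasFDerivAt
  rw [lam_eq]
  change fderiv ℝ ((fun q : ℝ × ℝ => q.2 ^ 2 - 6 * q.1 ^ 2) *
    fun q : ℝ × ℝ => Real.sqrt (1 + 4 * q.1 ^ 2 * (1 + q.1 ^ 2 * q.2 ^ 2))) p = _
  rw [hmul.fderiv, h0]
  simp

lemma sq6 (t : ℝ) : (Real.sqrt 6 * t) ^ 2 - 6 * t ^ 2 = 0 := by
  rw [mul_pow, Real.sq_sqrt (by norm_num : (6:ℝ) ≥ 0)]; ring

lemma fderiv_lam_ne (p : ℝ × ℝ) (h0 : p.2 ^ 2 - 6 * p.1 ^ 2 = 0) (h1 : p.1 ≠ 0) :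
    fderiv ℝ lamDS p ≠ 0 := by
  intro h
  have := congrFun (congrArg DFunLike.coe h) (1, 0)
  rw [fderiv_lam p h0] at this
  simp at this
  have hA : (0:ℝ) < 1 + 4 * p.1 ^ 2 * (1 + p.1 ^ 2 * p.2 ^ 2) := by positivity
  have hs : Real.sqrt (1 + 4 * p.1 ^ 2 * (1 + p.1 ^ 2 * p.2 ^ 2)) ≠ 0 :=
    ne_of_gt (Real.sqrt_pos.2 hA)
  rcases this with h | h
  · exact hs h
  · exact h1 (by linarith)

/-- For the double swallowtail: the origin is a degenerate singular point
(`λ(0,0) = 0` and `dλ₍₀,₀₎ = 0`), while every other singular point is a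
non-degenerate A₂-point: along `γ(t) = (t, √6·t)` (and likewise `(t, −√6·t)`)
with null vector field `η = (1,0)`, for `t ≠ 0` one has `dλ_{γ(t)} ≠ 0`, and
`det(γ̇(t), η) = −√6 ≠ 0` (resp. `√6 ≠ 0`). -/
theorem double_swallowtail_peak :
    lamDS (0, 0) = 0 ∧
    fderiv ℝ lamDS (0, 0) = 0 ∧
    (∀ p : ℝ × ℝ, lamDS p = 0 → p ≠ (0, 0) → fderiv ℝ lamDS p ≠ 0) ∧
    (∀ t : ℝ, fderiv ℝ fDS (t, Real.sqrt 6 * t) (1, 0) = 0 ∧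
      fderiv ℝ fDS (t, -(Real.sqrt 6 * t)) (1, 0) = 0) ∧
    (∀ t : ℝ, t ≠ 0 →
      fderiv ℝ lamDS (t, Real.sqrt 6 * t) ≠ 0 ∧
      fderiv ℝ lamDS (t, -(Real.sqrt 6 * t)) ≠ 0) ∧
    (∀ t : ℝ,
      det2 (deriv (fun s : ℝ => (s, Real.sqrt 6 * s)) t) (1, 0) = -Real.sqrt 6 ∧
      det2 (deriv (fun s : ℝ => (s, -(Real.sqrt 6 * s))) t) (1, 0) = Real.sqrt 6) ∧
    -Real.sqrt 6 ≠ (0 : ℝ) ∧ Real.sqrt 6 ≠ (0 : ℝ) := by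
  have h6 : Real.sqrt 6 ≠ 0 := ne_of_gt (Real.sqrt_pos.2 (by norm_num))
  refine ⟨?_, ?_, ?_, ?_, ?_, ?_, by simpa using h6, h6⟩
  · rw [lam_eq]; norm_num
  · rw [fderiv_lam (0, 0) (by norm_num)]
    apply ContinuousLinearMap.ext; intro v; simp
  · intro p hp hne
    have hA : (0:ℝ) < 1 + 4 * p.1 ^ 2 * (1 + p.1 ^ 2 * p.2 ^ 2) := by positivity
    rw [lam_eq] at hp
    have h0 : p.2 ^ 2 - 6 * p.1 ^ 2 = 0 := by
      rcases mul_eq_zero.1 hp with h | h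
      · exact h
      · exact absurd h (ne_of_gt (Real.sqrt_pos.2 hA))
    have h1 : p.1 ≠ 0 := by
      intro h1
      apply hne
      have : p.2 = 0 := by
        have : p.2 ^ 2 = 0 := by rw [h1] at h0; linarith
        exact pow_eq_zero_iff (by norm_num) |>.1 this
      exact Prod.ext h1 this
    exact fderiv_lam_ne p h0 h1
  · intro t
    constructor <;> rw [fu] <;> funext i <;> fin_cases i <;>
      simp [neg_sq, mul_pow, Real.sq_sqrt (show (0:ℝ) ≤ 6 by norm_num)] <;> ring
  · intro t ht
    refine ⟨fderiv_lam_ne _ ?_ ht, fderiv_lam_ne _ ?_ ht⟩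
    · simpa using sq6 t
    · simpa [neg_sq] using sq6 t
  · intro t
    have hd : deriv (fun s : ℝ => (s, Real.sqrt 6 * s)) t = (1, Real.sqrt 6) := by
      have : HasDerivAt (fun s : ℝ => (s, Real.sqrt 6 * s)) (1, Real.sqrt 6) t := by
        exact HasDerivAt.prodMk (hasDerivAt_id t) (by simpa using (hasDerivAt_id t).const_mul (Real.sqrt 6))
      exact this.deriv
    have hd' : deriv (fun s : ℝ => (s, -(Real.sqrt 6 * s))) t = (1, -Real.sqrt 6) := by
      have : HasDerivAt (fun s : ℝ => (s, -(Real.sqrt 6 * s))) (1, -Real.sqrt 6) t := by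
        exact HasDerivAt.prodMk (hasDerivAt_id t)
          (by have h := ((hasDerivAt_id t).const_mul (Real.sqrt 6)).neg
              simp only [id, mul_one] at h; exact h)
      exact this.deriv
    rw [hd, hd']
    constructor <;> simp [det2, Matrix.det_fin_two_of]
end
end
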